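/- arXiv:1608.07735 — 3 statements merged into one kernel-verified Lean document; each statement's English description precedes it below -/
import Mathlib

section
/- Let $\lambda^-, \lambda^+ : \mathbb{N} \to \mathbb{R}$ and let $\mathbf{1}_{\mathbb{P}}$ denote the indicator function of the primes. Suppose that for all $m$ in a set $\mathcal{I}$ one has $\lambda^-(m) \le \mathbf{1}_{\mathbb{P}}(m) \le \lambda^+(m)$. Then for all $m_1, \dots, m_5 \in \mathcal{I}$, $\mathbf{1}_{\mathbb{P}}(m_1)\cdots\mathbf{1}_{\mathbb{P}}(m_5) \ge \sum_{i=1}^{5} \lambda^-(m_i) \prod_{j \ne i} \lambda^+(m_j) - 4\,\lambda^+(m_1)\cdots\lambda^+(m_5)$. -/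
/-!
Induct on the number of variables. Writing `B = ∏ λ⁺`, `S = ∑ λ⁻ᵢ ∏_{j ≠ i} λ⁺ⱼ` and
`n` for the current number of variables, one always has `S ≤ n B`. Adjoining a variable with
indicator `0` makes the left side `0` and the right side `λ⁻ B + λ⁺ (S - n B) ≤ 0`; adjoining
one with indicator `1` changes the right side by `-(λ⁺ - 1)(n B - S) - (1 - λ⁻) B ≤ 0`.
-/

open Finset

lemma sum_mul_prod_erase_insert {ι R : Type*} [CommSemiring R] [DecidableEq ι] {s : Finset ι}
    {k : ι} (hk : k ∉ s) (a b : ι → R) :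
    ∑ i ∈ insert k s, a i * ∏ j ∈ (insert k s).erase i, b j =
      a k * ∏ i ∈ s, b i + b k * ∑ i ∈ s, a i * ∏ j ∈ s.erase i, b j := by
  rw [sum_insert hk, erase_insert hk, mul_sum]
  congr 1
  refine sum_congr rfl fun i hi => ?_
  have hki : k ≠ i := fun h => hk (h ▸ hi)
  rw [erase_insert_of_ne hki, prod_insert fun h => hk (mem_of_mem_erase h)]
  ring

variable {ι R : Type*} [CommRing R] [LinearOrder R] [IsStrictOrderedRing R] [DecidableEq ι]

lemma sum_mul_prod_erase_le_card_mul_prod (s : Finset ι) (a b : ι → R)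
    (hab : ∀ i ∈ s, a i ≤ b i) (hb : ∀ i ∈ s, 0 ≤ b i) :
    ∑ i ∈ s, a i * ∏ j ∈ s.erase i, b j ≤ s.card * ∏ i ∈ s, b i := by
  have hterm : ∀ i ∈ s, a i * ∏ j ∈ s.erase i, b j ≤ ∏ i ∈ s, b i := fun i hi => by
    rw [← mul_prod_erase s b hi]
    exact mul_le_mul_of_nonneg_right (hab i hi)
      (prod_nonneg fun j hj => hb j (mem_of_mem_erase hj))
  simpa using sum_le_card_nsmul s _ _ hterm

theorem vector_sieve_lower_bound (s : Finset ι) (x a b : ι → R)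
    (hx : ∀ i ∈ s, x i = 0 ∨ x i = 1) (hax : ∀ i ∈ s, a i ≤ x i) (hxb : ∀ i ∈ s, x i ≤ b i) :
    ∑ i ∈ s, a i * ∏ j ∈ s.erase i, b j - (s.card - 1) * ∏ i ∈ s, b i ≤ ∏ i ∈ s, x i := by
  induction s using Finset.induction_on with
  | empty => simp
  | insert k s hk ih =>
    simp only [forall_mem_insert] at hx hax hxb
    have hb : ∀ i ∈ s, 0 ≤ b i := fun i hi => by
      rcases hx.2 i hi with h | h <;> linarith [hxb.2 i hi]
    have hB : 0 ≤ ∏ i ∈ s, b i := prod_nonneg hb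
    have hS := sum_mul_prod_erase_le_card_mul_prod s a b
      (fun i hi => (hax.2 i hi).trans (hxb.2 i hi)) hb
    have ih := ih hx.2 hax.2 hxb.2
    rw [sum_mul_prod_erase_insert hk, prod_insert hk, prod_insert hk, card_insert_of_notMem hk]
    push_cast
    rcases hx.1 with h | h <;> rw [h] at hax hxb ⊢
    · nlinarith [mul_nonneg hxb.1 (sub_nonneg.2 hS)]
    · nlinarith [mul_nonneg (sub_nonneg.2 hxb.1) (sub_nonneg.2 hS)]

theorem stmt_0 (I : Set ℕ) (lamm lamp : ℕ → ℝ)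
    (hsand : ∀ m ∈ I, lamm m ≤ (if Nat.Prime m then (1:ℝ) else 0) ∧
      (if Nat.Prime m then (1:ℝ) else 0) ≤ lamp m)
    (m : Fin 5 → ℕ) (hm : ∀ i, m i ∈ I) :
    ∏ i, (if Nat.Prime (m i) then (1:ℝ) else 0) ≥
      (∑ i, lamm (m i) * ∏ j ∈ univ.erase i, lamp (m j)) -
        4 * ∏ i, lamp (m i) := by
  have h := vector_sieve_lower_bound univ (fun i => if Nat.Prime (m i) then (1:ℝ) else 0)
    (fun i => lamm (m i)) (fun i => lamp (m i)) (fun i _ => by split_ifs <;> simp)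
    (fun i _ => (hsand _ (hm i)).1) (fun i _ => (hsand _ (hm i)).2)
  norm_num at h
  linarith
end

section
/- More generally, if real numbers $a_i, b_i, c_i$ for $1 \le i \le 5$ satisfy $a_i \le b_i \le c_i$, $b_i \in \{0,1\}$, and $c_i \ge 0$ for each $i$, then $b_1 b_2 b_3 b_4 b_5 \ge \sum_{i=1}^{5} a_i \prod_{j \ne i} c_j - 4\, c_1 c_2 c_3 c_4 c_5$. -/
/-! If some `b k = 0`, then `a k ≤ 0` kills the `k`-th term and each of the other terms is at most
`∏ c`. If every `b i = 1`, then `a i ≤ 1 ≤ c i`, and the claim reduces to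
`∑ i, ∏ j ≠ i, c j ≤ 1 + (n - 1) ∏ c` for `c ≥ 1`, which follows by induction on the number of
factors from `(c x - 1) (∏ c - 1) ≥ 0`. -/

open Finset

namespace VectorSieve

variable {ι : Type*} [DecidableEq ι]

theorem sum_prod_erase_le_one_add {s : Finset ι} {c : ι → ℝ} (hc : ∀ i ∈ s, 1 ≤ c i) :
    ∑ i ∈ s, ∏ j ∈ s.erase i, c j ≤ 1 + (#s - 1) * ∏ i ∈ s, c i := by
  induction s using Finset.induction_on with
  | empty => simp
  | insert x s hx ih =>
    have hcx : 1 ≤ c x := hc x (mem_insert_self x s)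
    have hcs : ∀ i ∈ s, 1 ≤ c i := fun i hi => hc i (mem_insert_of_mem hi)
    have hP : 1 ≤ ∏ i ∈ s, c i := one_le_prod hcs
    have hsum : ∑ i ∈ insert x s, ∏ j ∈ (insert x s).erase i, c j
        = ∏ i ∈ s, c i + c x * ∑ i ∈ s, ∏ j ∈ s.erase i, c j := by
      rw [sum_insert hx, erase_insert hx, mul_sum]
      congr 1
      refine sum_congr rfl fun i hi => ?_
      have hxi : x ≠ i := fun h => hx (h ▸ hi)
      rw [erase_insert_of_ne hxi, prod_insert fun h => hx (mem_of_mem_erase h)]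
    rw [hsum, prod_insert hx, card_insert_of_notMem hx]
    push_cast
    nlinarith [ih hcs, mul_nonneg (sub_nonneg.2 hcx) (sub_nonneg.2 hP)]

theorem mul_prod_erase_le_prod {s : Finset ι} {a c : ι → ℝ} {i : ι} (hi : i ∈ s)
    (hac : a i ≤ c i) (hc : ∀ j ∈ s, 0 ≤ c j) :
    a i * ∏ j ∈ s.erase i, c j ≤ ∏ j ∈ s, c j := by
  rw [← mul_prod_erase s c hi]
  exact mul_le_mul_of_nonneg_right hac (prod_nonneg fun j hj => hc j (mem_of_mem_erase hj))

theorem sum_mul_prod_erase_le_of_nonpos {s : Finset ι} {a c : ι → ℝ} {k : ι} (hk : k ∈ s)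
    (hak : a k ≤ 0) (hac : ∀ i ∈ s, a i ≤ c i) (hc : ∀ i ∈ s, 0 ≤ c i) :
    ∑ i ∈ s, a i * ∏ j ∈ s.erase i, c j ≤ (#s - 1) * ∏ i ∈ s, c i := by
  have hkterm : a k * ∏ j ∈ s.erase k, c j ≤ 0 :=
    mul_nonpos_of_nonpos_of_nonneg hak (prod_nonneg fun j hj => hc j (mem_of_mem_erase hj))
  have hrest : ∑ i ∈ s.erase k, a i * ∏ j ∈ s.erase i, c j ≤ ∑ _i ∈ s.erase k, ∏ j ∈ s, c j :=
    sum_le_sum fun i hi =>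
      mul_prod_erase_le_prod (mem_of_mem_erase hi) (hac i (mem_of_mem_erase hi)) hc
  rw [sum_const, card_erase_of_mem hk, nsmul_eq_mul, Nat.cast_pred (card_pos.2 ⟨k, hk⟩)] at hrest
  rw [← add_sum_erase s _ hk]
  linarith

theorem prod_ge_sum_mul_prod_erase_sub [Fintype ι] (a b c : ι → ℝ)
    (hab : ∀ i, a i ≤ b i) (hbc : ∀ i, b i ≤ c i)
    (hb01 : ∀ i, b i = 0 ∨ b i = 1) (hc : ∀ i, 0 ≤ c i) :
    ∏ i, b i ≥ (∑ i, a i * ∏ j ∈ univ.erase i, c j) - (Fintype.card ι - 1) * ∏ i, c i := by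
  by_cases hall : ∀ i, b i = 1
  · have ha : ∀ i, a i ≤ 1 := fun i => hall i ▸ hab i
    have hc1 : ∀ i ∈ univ, 1 ≤ c i := fun i _ => hall i ▸ hbc i
    have hterm : ∀ i ∈ univ, a i * ∏ j ∈ univ.erase i, c j ≤ ∏ j ∈ univ.erase i, c j :=
      fun i _ => mul_le_of_le_one_left (prod_nonneg fun j _ => hc j) (ha i)
    have hkey := sum_prod_erase_le_one_add hc1
    rw [prod_eq_one fun i _ => hall i, ← card_univ]
    linarith [sum_le_sum hterm]
  · push Not at hall
    obtain ⟨k, hk⟩ := hall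
    have hbk : b k = 0 := (hb01 k).resolve_right hk
    rw [prod_eq_zero (mem_univ k) hbk, ← card_univ]
    have := sum_mul_prod_erase_le_of_nonpos (mem_univ k) (hbk ▸ hab k)
      (fun i _ => (hab i).trans (hbc i)) (fun i _ => hc i)
    linarith

end VectorSieve

theorem stmt_1 (a b c : Fin 5 → ℝ)
    (hab : ∀ i, a i ≤ b i) (hbc : ∀ i, b i ≤ c i)
    (hb01 : ∀ i, b i = 0 ∨ b i = 1) (hc : ∀ i, 0 ≤ c i) :
    ∏ i, b i ≥ (∑ i, a i * ∏ j ∈ univ.erase i, c j) - 4 * ∏ i, c i := by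
  have h := VectorSieve.prod_ge_sum_mul_prod_erase_sub a b c hab hbc hb01 hc
  norm_num at h
  linarith
end

section
/- Let $k \ge 2$, let $x, y > 0$ with $y \le x/2$, let $\mathcal{I} = (x - y, x + y]$, and let $Q \ge 1$. Define $v(\beta) = \int_{\mathcal{I}} e(u^k \beta)\, du$ with $e(z) = \exp(2\pi i z)$. Then $\int_{-1/Q}^{1/Q} |v(\beta)|^2 \, d\beta \ll y x^{1-k} + y Q^{-1} \log(2 + x^k/Q)$, where the implied constant depends only on $k$. -/
open MeasureTheory

/-- `eC r = exp(2πir)`. -/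
noncomputable def eC (r : ℝ) : ℂ := Complex.exp (2 * Real.pi * Complex.I * r)

/-!
Integrating by parts against `1 / f'` bounds `‖∫ₐᵇ e(f)‖` by `1 / (π f'(a))` when `f'` is
positive and increasing; for `f(u) = u ^ k β` this gives `|β| ‖v(β)‖ ≤ A` with
`A ≍ x ^ (1 - k)`, while trivially `‖v(β)‖ ≤ c := 2y`. Together these give
`‖v(β)‖² ≤ 2c²A² / (A² + c²β²)`, whose integral over the whole line is
`2πcA ≪ y x ^ (1 - k)`.
-/

open Real Set intervalIntegral
open scoped ComplexConjugate

@[fun_prop]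
lemma continuous_eC : Continuous eC := by
  unfold eC; fun_prop

lemma norm_eC (r : ℝ) : ‖eC r‖ = 1 := by
  rw [eC, show 2 * π * Complex.I * r = ((2 * π * r : ℝ) : ℂ) * Complex.I by push_cast; ring]
  exact Complex.norm_exp_ofReal_mul_I _

lemma eC_neg (r : ℝ) : eC (-r) = conj (eC r) := by
  rw [eC, eC, ← Complex.exp_conj]
  simp only [map_mul, Complex.conj_I, Complex.conj_ofReal, map_ofNat]
  push_cast
  ring_nf

lemma HasDerivAt.eC_comp {f : ℝ → ℝ} {f' u : ℝ} (hf : HasDerivAt f f' u) :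
    HasDerivAt (fun t => eC (f t)) (2 * π * Complex.I * f' * eC (f u)) u := by
  have := ((hf.ofReal_comp).const_mul (2 * π * Complex.I)).cexp
  simpa only [eC, mul_comm (Complex.exp _), mul_assoc] using this

lemma norm_integral_eC_neg (f : ℝ → ℝ) (a b : ℝ) :
    ‖∫ u in a..b, eC (-f u)‖ = ‖∫ u in a..b, eC (f u)‖ := by
  simp only [eC_neg, intervalIntegral_conj, RCLike.norm_conj]

lemma norm_integral_eC_le_length (f : ℝ → ℝ) {a b : ℝ} (hab : a ≤ b) :
    ‖∫ u in a..b, eC (f u)‖ ≤ b - a := by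
  simpa [norm_eC, abs_of_nonneg (sub_nonneg.2 hab)] using
    norm_integral_le_of_norm_le_const (a := a) (b := b) (C := 1) (f := fun u => eC (f u))
      fun u _ => (norm_eC _).le

theorem integral_eC_eq_boundary_sub_integral {f f' f'' : ℝ → ℝ} {a b : ℝ}
    (hf : ∀ u ∈ uIcc a b, HasDerivAt f (f' u) u)
    (hf' : ∀ u ∈ uIcc a b, HasDerivAt f' (f'' u) u)
    (hf''_cont : ContinuousOn f'' (uIcc a b)) (hf'_ne : ∀ u ∈ uIcc a b, f' u ≠ 0) :
    ∫ u in a..b, eC (f u) =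
      (2 * π * Complex.I)⁻¹ * (((f' b)⁻¹ : ℝ) : ℂ) * eC (f b)
        - (2 * π * Complex.I)⁻¹ * (((f' a)⁻¹ : ℝ) : ℂ) * eC (f a)
        - ∫ u in a..b,
            (2 * π * Complex.I)⁻¹ * ((-f'' u / f' u ^ 2 : ℝ) : ℂ) * eC (f u) := by
  have hf'_cont : ContinuousOn f' (uIcc a b) := fun u hu =>
    (hf' u hu).continuousAt.continuousWithinAt
  have hf_cont : ContinuousOn f (uIcc a b) := fun u hu =>
    (hf u hu).continuousAt.continuousWithinAt
  have hw'_cont : ContinuousOn (fun u => -f'' u / f' u ^ 2) (uIcc a b) :=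
    hf''_cont.neg.div (hf'_cont.pow 2) fun u hu => pow_ne_zero 2 (hf'_ne u hu)
  have hw : ∀ u ∈ uIcc a b, HasDerivAt (fun t => (f' t)⁻¹) (-f'' u / f' u ^ 2) u :=
    fun u hu => (hf' u hu).inv (hf'_ne u hu)
  rw [← intervalIntegral.integral_mul_deriv_eq_deriv_mul
    (fun u hu => ((hw u hu).ofReal_comp).const_mul (2 * π * Complex.I)⁻¹)
    (fun u hu => (hf u hu).eC_comp)
    (continuousOn_const.mul
      (Complex.continuous_ofReal.comp_continuousOn hw'_cont)).intervalIntegrable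
    ((continuousOn_const.mul (Complex.continuous_ofReal.comp_continuousOn hf'_cont)).mul
      (continuous_eC.comp_continuousOn hf_cont)).intervalIntegrable]
  refine integral_congr fun u hu => ?_
  have : (f' u : ℂ) ≠ 0 := Complex.ofReal_ne_zero.2 (hf'_ne u hu)
  push_cast
  field_simp

theorem norm_integral_eC_le_of_deriv_pos {f f' f'' : ℝ → ℝ} {a b : ℝ} (hab : a ≤ b)
    (hf : ∀ u ∈ Icc a b, HasDerivAt f (f' u) u)
    (hf' : ∀ u ∈ Icc a b, HasDerivAt f' (f'' u) u)
    (hf''_cont : ContinuousOn f'' (Icc a b)) (hf'_pos : ∀ u ∈ Icc a b, 0 < f' u)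
    (hf''_nonneg : ∀ u ∈ Icc a b, 0 ≤ f'' u) :
    ‖∫ u in a..b, eC (f u)‖ ≤ (π * f' a)⁻¹ := by
  rw [← uIcc_of_le hab] at hf hf' hf''_cont hf'_pos hf''_nonneg
  have hw : ∀ u ∈ uIcc a b, HasDerivAt (fun t => (f' t)⁻¹) (-f'' u / f' u ^ 2) u :=
    fun u hu => (hf' u hu).inv (hf'_pos u hu).ne'
  have hf'_cont : ContinuousOn f' (uIcc a b) := fun u hu =>
    (hf' u hu).continuousAt.continuousWithinAt
  have hw'_cont : ContinuousOn (fun u => -f'' u / f' u ^ 2) (uIcc a b) :=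
    hf''_cont.neg.div (hf'_cont.pow 2) fun u hu => by positivity [hf'_pos u hu]
  have hnorm : ∀ r s : ℝ,
      ‖(2 * π * Complex.I)⁻¹ * (r : ℂ) * eC s‖ = (2 * π)⁻¹ * |r| := by
    intro r s
    simp [norm_eC, abs_of_pos pi_pos, mul_comm]
  have hnorm_w' : ∀ u ∈ uIcc a b, |-f'' u / f' u ^ 2| = -(-f'' u / f' u ^ 2) := fun u hu =>
    abs_of_nonpos (div_nonpos_of_nonpos_of_nonneg (neg_nonpos.2 (hf''_nonneg u hu)) (sq_nonneg _))
  -- `1 / f'` is decreasing, so the integral of `|(1 / f')'|` telescopes.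
  calc ‖∫ u in a..b, eC (f u)‖
      ≤ ‖(2 * π * Complex.I)⁻¹ * (((f' b)⁻¹ : ℝ) : ℂ) * eC (f b)‖
          + ‖(2 * π * Complex.I)⁻¹ * (((f' a)⁻¹ : ℝ) : ℂ) * eC (f a)‖
          + ∫ u in a..b,
              ‖(2 * π * Complex.I)⁻¹ * ((-f'' u / f' u ^ 2 : ℝ) : ℂ) * eC (f u)‖ := by
        rw [integral_eC_eq_boundary_sub_integral hf hf' hf''_cont fun u hu => (hf'_pos u hu).ne']
        exact (norm_sub_le _ _).trans
          (add_le_add (norm_sub_le _ _) (norm_integral_le_integral_norm hab))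
    _ = (π * f' a)⁻¹ := by
        simp only [hnorm]
        rw [integral_congr fun u hu => congrArg _ (hnorm_w' u hu),
          intervalIntegral.integral_const_mul, intervalIntegral.integral_neg,
          integral_eq_sub_of_hasDerivAt hw hw'_cont.intervalIntegrable,
          abs_of_pos (inv_pos.2 (hf'_pos a left_mem_uIcc)),
          abs_of_pos (inv_pos.2 (hf'_pos b right_mem_uIcc))]
        field_simp
        ring

lemma norm_integral_eC_pow_mul_le {k : ℕ} (hk : 1 ≤ k) {a b β : ℝ} (ha : 0 < a)
    (hab : a ≤ b) (hβ : 0 < β) :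
    ‖∫ u in a..b, eC (u ^ k * β)‖ ≤ (π * k * a ^ (k - 1) * β)⁻¹ := by
  have hpos : ∀ u ∈ Icc a b, 0 < u := fun u hu => ha.trans_le hu.1
  refine (norm_integral_eC_le_of_deriv_pos (f' := fun u => k * u ^ (k - 1) * β)
    (f'' := fun u => k * ((k - 1 : ℕ) * u ^ (k - 1 - 1)) * β) hab
    (fun u _ => (hasDerivAt_pow k u).mul_const β)
    (fun u _ => ((hasDerivAt_pow (k - 1) u).const_mul (k : ℝ)).mul_const β)
    (by fun_prop) (fun u hu => ?_) (fun u hu => ?_)).trans_eq (by ring_nf)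
  · have := hpos u hu
    have : (0 : ℝ) < k := by exact_mod_cast hk
    positivity
  · have := hpos u hu
    positivity

lemma abs_mul_norm_integral_eC_pow_mul_le {k : ℕ} (hk : 1 ≤ k) {a b : ℝ} (ha : 0 < a)
    (hab : a ≤ b) (β : ℝ) :
    |β| * ‖∫ u in a..b, eC (u ^ k * β)‖ ≤ (π * k * a ^ (k - 1))⁻¹ := by
  have hpos : ∀ {β : ℝ}, 0 < β →
      β * ‖∫ u in a..b, eC (u ^ k * β)‖ ≤ (π * k * a ^ (k - 1))⁻¹ := by
    intro β hβ
    rw [← le_div_iff₀' hβ, div_eq_mul_inv, ← mul_inv]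
    exact norm_integral_eC_pow_mul_le hk ha hab hβ
  rcases lt_trichotomy β 0 with hβ | rfl | hβ
  · have := hpos (neg_pos.2 hβ)
    rw [abs_of_neg hβ, ← norm_integral_eC_neg]
    simpa only [mul_neg] using this
  · simp only [abs_zero, zero_mul]
    positivity
  · rw [abs_of_pos hβ]
    exact hpos hβ

lemma integral_inv_sq_add_mul_sq_le {A c : ℝ} (hA : 0 < A) (hc : 0 < c) (a b : ℝ) :
    ∫ β in a..b, (A ^ 2 + c ^ 2 * β ^ 2)⁻¹ ≤ π / (A * c) := by
  have hderiv : ∀ β ∈ uIcc a b,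
      HasDerivAt (fun t => arctan (c * t / A) / (A * c)) (A ^ 2 + c ^ 2 * β ^ 2)⁻¹ β := by
    intro β _
    have h : HasDerivAt (fun t => c * t / A) (c / A) β := by
      simpa using ((hasDerivAt_id β).const_mul c).div_const A
    refine (h.arctan.div_const (A * c)).congr_deriv ?_
    field_simp
  have hcont : Continuous fun β : ℝ => (A ^ 2 + c ^ 2 * β ^ 2)⁻¹ :=
    (by fun_prop : Continuous fun β : ℝ => A ^ 2 + c ^ 2 * β ^ 2).inv₀ fun β => by positivity
  rw [integral_eq_sub_of_hasDerivAt hderiv (hcont.intervalIntegrable a b), ← sub_div,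
    div_le_div_iff_of_pos_right (by positivity)]
  linarith [arctan_lt_pi_div_two (c * b / A), neg_pi_div_two_lt_arctan (c * a / A)]

theorem integral_norm_sq_le_of_norm_le {E : Type*} [NormedAddCommGroup E] {V : ℝ → E}
    (hV : Continuous V) {c A : ℝ} (hc : 0 < c) (hA : 0 < A) (hVc : ∀ β, ‖V β‖ ≤ c)
    (hVA : ∀ β, |β| * ‖V β‖ ≤ A) {a b : ℝ} (hab : a ≤ b) :
    ∫ β in a..b, ‖V β‖ ^ 2 ≤ 2 * π * c * A := by
  have hpoint : ∀ β, ‖V β‖ ^ 2 ≤ 2 * (c * A) ^ 2 * (A ^ 2 + c ^ 2 * β ^ 2)⁻¹ := by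
    intro β
    have h1 : ‖V β‖ ^ 2 ≤ c ^ 2 := pow_le_pow_left₀ (norm_nonneg _) (hVc β) 2
    have h2 : (|β| * ‖V β‖) ^ 2 ≤ A ^ 2 := pow_le_pow_left₀ (by positivity) (hVA β) 2
    rw [mul_pow, sq_abs] at h2
    rw [← div_eq_mul_inv, le_div_iff₀ (by positivity)]
    nlinarith [sq_nonneg c, sq_nonneg A]
  have hcont : Continuous fun β : ℝ => 2 * (c * A) ^ 2 * (A ^ 2 + c ^ 2 * β ^ 2)⁻¹ :=
    continuous_const.mul <| (by fun_prop : Continuous fun β : ℝ => A ^ 2 + c ^ 2 * β ^ 2).inv₀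
      fun β => by positivity
  calc ∫ β in a..b, ‖V β‖ ^ 2
      ≤ ∫ β in a..b, 2 * (c * A) ^ 2 * (A ^ 2 + c ^ 2 * β ^ 2)⁻¹ :=
        integral_mono_on hab ((hV.norm.pow 2).intervalIntegrable a b)
          (hcont.intervalIntegrable a b) fun β _ => hpoint β
    _ ≤ 2 * (c * A) ^ 2 * (π / (A * c)) := by
        rw [intervalIntegral.integral_const_mul]
        exact mul_le_mul_of_nonneg_left (integral_inv_sq_add_mul_sq_le hA hc a b) (by positivity)
    _ = 2 * π * c * A := by field_simp

lemma inv_natCast_mul_pow_le_rpow {k : ℕ} (hk : 1 ≤ k) {a x : ℝ} (hx : 0 < x)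
    (ha : x / 2 ≤ a) : ((k : ℝ) * a ^ (k - 1))⁻¹ ≤ 2 ^ (k - 1) * x ^ ((1 : ℝ) - k) := by
  have hk0 : (1 : ℝ) ≤ k := by exact_mod_cast hk
  have ha0 : 0 < a := by linarith
  rw [show (1 : ℝ) - k = -((k - 1 : ℕ) : ℝ) by push_cast [hk]; ring, Real.rpow_neg hx.le,
    Real.rpow_natCast, ← div_eq_mul_inv, ← div_pow, ← inv_div, inv_pow]
  gcongr
  calc (x / 2) ^ (k - 1) ≤ a ^ (k - 1) := by gcongr
    _ ≤ k * a ^ (k - 1) := le_mul_of_one_le_left (by positivity) hk0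

theorem stmt_3 (k : ℕ) (hk : 2 ≤ k) :
    ∃ C > 0, ∀ x y Q : ℝ, 0 < x → 0 < y → y ≤ x / 2 → 1 ≤ Q →
      (∫ β in (-(1/Q))..(1/Q),
          ‖∫ u in (x - y)..(x + y), eC (u ^ k * β)‖ ^ 2) ≤
        C * (y * x ^ ((1 : ℝ) - k) + y / Q * Real.log (2 + x ^ (k : ℝ) / Q)) := by
  refine ⟨2 ^ (k + 1), by positivity, fun x y Q hx hy hyx hQ => ?_⟩
  have hk1 : 1 ≤ k := by omega
  have ha0 : 0 < x - y := by linarith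
  have hab : x - y ≤ x + y := by linarith
  have hV : Continuous fun β => ∫ u in (x - y)..(x + y), eC (u ^ k * β) :=
    continuous_parametric_intervalIntegral_of_continuous' (by fun_prop) _ _
  have hL2 := integral_norm_sq_le_of_norm_le (a := -(1 / Q)) (b := 1 / Q) hV
    (by positivity : 0 < 2 * y)
    (by positivity : 0 < (π * k * (x - y) ^ (k - 1))⁻¹)
    (fun β => (norm_integral_eC_le_length _ hab).trans_eq (by ring))
    (abs_mul_norm_integral_eC_pow_mul_le hk1 ha0 hab) (neg_le_self (by positivity))
  have hlog : 0 ≤ y / Q * Real.log (2 + x ^ (k : ℝ) / Q) := by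
    have : 0 ≤ x ^ (k : ℝ) / Q := by positivity
    exact mul_nonneg (by positivity) (Real.log_nonneg (by linarith))
  calc _ ≤ 2 * π * (2 * y) * (π * k * (x - y) ^ (k - 1))⁻¹ := hL2
    _ = 4 * y * (k * (x - y) ^ (k - 1))⁻¹ := by
        field_simp
        norm_num
    _ ≤ 4 * y * (2 ^ (k - 1) * x ^ ((1 : ℝ) - k)) := by
        gcongr
        exact inv_natCast_mul_pow_le_rpow hk1 hx (by linarith)
    _ = 2 ^ (k + 1) * (y * x ^ ((1 : ℝ) - k)) := by
        rw [show k + 1 = k - 1 + 2 by omega, pow_add]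
        ring
    _ ≤ _ := by gcongr; linarith
end
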